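/- The number of compositions (m_1,...,m_t) of m into positive parts, weighted by (-1)^t times the product C(n-m_1, m_1-1)·∏_{i=2}^t C(n-m_i, m_i), depends only on m (not on n) whenever n ≥ m; in particular for m = n it equals (-1)^n C_{n-1}. -/

import Mathlib

open Finset PowerSeries

/-!
Write `F n = ∑ₖ C(n - k, k) Xᵏ` (a Fibonacci polynomial: `F (n + 2) = F (n + 1) + X F n`).
Summing `∏ -C(n - mᵢ, mᵢ)` over the compositions of `m` gives the coefficients of `(F n)⁻¹`, so
after splitting off the first block the weighted sum is the coefficient of `Xᵐ` in
`-X F (n - 1) (F n)⁻¹`. The series `d = ∑ⱼ (-1)ʲ C_{j-1} Xʲ = -X C(-X)` satisfies `d² = d + X` by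
the Catalan equation, and the Fibonacci recurrence then gives `d F n + X F (n - 1) = dⁿ⁺¹`.
As `X ∣ d`, the series `-X F (n - 1) (F n)⁻¹ = d - dⁿ⁺¹ (F n)⁻¹` agrees with `d` up to degree `n`.
-/

/-- The weight of a composition `l = (m₁, …, m_t)` of `m`: `(-1)^t` times
`C(n - m₁, m₁ - 1)` for the first part and `C(n - mᵢ, mᵢ)` for the rest. -/
def compWeight (n : ℕ) (l : List ℕ) : ℤ :=
  (-1) ^ l.length * ((n - l.headI).choose (l.headI - 1) : ℤ) *
    (l.tail.map fun mi => ((n - mi).choose mi : ℤ)).prod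

namespace Composition

def sigmaCons (m : ℕ) (x : Σ j : Fin (m + 1), Composition (m - j)) : Composition (m + 1) where
  blocks := ((x.1 : ℕ) + 1) :: x.2.blocks
  blocks_pos {i} hi := by
    rcases List.mem_cons.1 hi with rfl | h
    · omega
    · exact x.2.blocks_pos h
  blocks_sum := by
    rw [List.sum_cons, x.2.blocks_sum]
    omega

theorem sigmaCons_bijective (m : ℕ) : Function.Bijective (sigmaCons m) := by
  refine ⟨?_, fun c => ?_⟩
  · rintro ⟨j, c⟩ ⟨j', c'⟩ h
    simp only [sigmaCons, Composition.mk.injEq, List.cons.injEq, add_left_inj] at h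
    obtain rfl : j = j' := Fin.ext h.1
    obtain rfl : c = c' := Composition.ext h.2
    rfl
  · obtain ⟨b, l, hbl⟩ := List.exists_cons_of_ne_nil (c.blocks_eq_nil.not.2 m.succ_ne_zero)
    have hb : 0 < b := c.blocks_pos (by simp [hbl])
    have hsum : b + l.sum = m + 1 := by simpa [hbl] using c.blocks_sum
    refine ⟨⟨⟨b - 1, by omega⟩,
      ⟨l, fun hi => c.blocks_pos (by simp [hbl, hi]), by simp only; omega⟩⟩, ?_⟩
    apply Composition.ext
    simp only [sigmaCons, hbl]
    congr 1
    omega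

theorem sum_blocks_succ {M : Type*} [AddCommMonoid M] (m : ℕ) (f : List ℕ → M) :
    ∑ c : Composition (m + 1), f c.blocks =
      ∑ j ∈ range (m + 1), ∑ c : Composition (m - j), f ((j + 1) :: c.blocks) := by
  rw [← Fintype.sum_bijective _ (sigmaCons_bijective m) _ _ fun _ => rfl, ← univ_sigma_univ,
    sum_sigma]
  exact Fin.sum_univ_eq_sum_range (fun j => ∑ c : Composition (m - j), f ((j + 1) :: c.blocks)) _

theorem sum_blocks_zero {M : Type*} [AddCommMonoid M] (f : List ℕ → M) :
    ∑ c : Composition 0, f c.blocks = f [] := by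
  rw [sum_congr rfl fun c _ => by rw [c.blocks_eq_nil.2 rfl], sum_const, card_univ,
    composition_card, pow_zero, one_smul]

end Composition

section CompositionSeries

variable {R : Type*}

noncomputable def compositionSeries [Semiring R] (f : ℕ → R) : R⟦X⟧ :=
  PowerSeries.mk fun m => ∑ c : Composition m, (c.blocks.map f).prod

theorem compositionSeries_eq [Semiring R] (f : ℕ → R) :
    compositionSeries f = 1 + X * (PowerSeries.mk (fun j => f (j + 1)) * compositionSeries f) := by
  ext (_ | m)
  · simp [compositionSeries, Composition.sum_blocks_zero fun l => (l.map f).prod]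
  · rw [compositionSeries, coeff_mk, Composition.sum_blocks_succ m fun l => (l.map f).prod,
      map_add, coeff_one, if_neg m.succ_ne_zero, zero_add, coeff_succ_X_mul, coeff_mul,
      Nat.sum_antidiagonal_eq_sum_range_succ_mk]
    refine sum_congr rfl fun j _ => ?_
    simp [mul_sum]

theorem mul_compositionSeries_neg_coeff [CommRing R] {φ : R⟦X⟧} (hφ : constantCoeff φ = 1) :
    φ * compositionSeries (fun i => -coeff i φ) = 1 := by
  set ψ : R⟦X⟧ := PowerSeries.mk fun j => coeff (j + 1) φ
  have hφψ : φ = X * ψ + 1 := by simpa [hφ] using φ.eq_X_mul_shift_add_const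
  have hψ : (PowerSeries.mk fun j => -coeff (j + 1) φ) = -ψ := by ext; simp [ψ]
  have h := compositionSeries_eq fun i => -coeff i φ
  rw [hψ] at h
  linear_combination (compositionSeries fun i => -coeff i φ) * hφψ + h

end CompositionSeries

section Fibonacci

variable (R : Type*)

noncomputable def fibSeries [Semiring R] (n : ℕ) : R⟦X⟧ :=
  PowerSeries.mk fun k => ((n - k).choose k : R)

variable {R}

theorem constantCoeff_fibSeries [Semiring R] (n : ℕ) : constantCoeff (fibSeries R n) = 1 := by
  simp [fibSeries, ← coeff_zero_eq_constantCoeff_apply]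

theorem fibSeries_zero [Semiring R] : fibSeries R 0 = 1 := by
  ext (_ | k) <;> simp [fibSeries, coeff_one]

theorem fibSeries_one [Semiring R] : fibSeries R 1 = 1 := by
  ext (_ | k) <;> simp [fibSeries, coeff_one]

theorem fibSeries_add_two [Semiring R] (n : ℕ) :
    fibSeries R (n + 2) = fibSeries R (n + 1) + X * fibSeries R n := by
  ext (_ | k)
  · simp [fibSeries]
  · rw [map_add, coeff_succ_X_mul]
    simp only [fibSeries, coeff_mk]
    rcases le_or_gt k n with hk | hk
    · rw [show n + 2 - (k + 1) = n - k + 1 by omega, show n + 1 - (k + 1) = n - k by omega,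
        Nat.choose_succ_succ', Nat.cast_add, add_comm]
    · rw [show n + 2 - (k + 1) = 0 by omega, show n + 1 - (k + 1) = 0 by omega,
        show n - k = 0 by omega, Nat.choose_eq_zero_of_lt k.succ_pos,
        Nat.choose_eq_zero_of_lt (by omega : 0 < k)]
      simp

theorem mul_fibSeries_add_X_mul_fibSeries [CommRing R] {d : R⟦X⟧} (hd : d ^ 2 = d + X) (n : ℕ) :
    d * fibSeries R (n + 1) + X * fibSeries R n = d ^ (n + 2) := by
  induction n using Nat.twoStepInduction with
  | zero => rw [fibSeries_one, fibSeries_zero]; linear_combination -hd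
  | one => rw [fibSeries_add_two, fibSeries_one, fibSeries_zero]; linear_combination -(1 + d) * hd
  | more n ih₀ ih₁ =>
    linear_combination ih₁ + X * ih₀ - d ^ (n + 2) * hd + d * fibSeries_add_two (R := R) (n + 1) +
      X * fibSeries_add_two (R := R) n

end Fibonacci

noncomputable def signedCatalanSeries (R : Type*) [CommRing R] : R⟦X⟧ :=
  -X * rescale (-1) (catalanSeries.map (Nat.castRingHom R))

section SignedCatalan

variable {R : Type*} [CommRing R]

theorem coeff_succ_signedCatalanSeries (j : ℕ) :
    coeff (j + 1) (signedCatalanSeries R) = (-1) ^ (j + 1) * catalan j := by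
  simp [signedCatalanSeries, neg_mul, pow_succ]

theorem X_dvd_signedCatalanSeries : X ∣ signedCatalanSeries R :=
  (dvd_neg.2 dvd_rfl).mul_right _

theorem signedCatalanSeries_sq : signedCatalanSeries R ^ 2 = signedCatalanSeries R + X := by
  have h := congrArg (fun φ => rescale (-1 : R) (φ.map (Nat.castRingHom R)))
    catalanSeries_sq_mul_X_add_one
  simp only [map_add, map_mul, map_pow, map_X, map_one, rescale_X, map_neg, neg_mul, one_mul] at h
  rw [signedCatalanSeries]
  linear_combination -X * h

end SignedCatalan

theorem compWeight_cons (n j : ℕ) (l : List ℕ) :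
    compWeight n ((j + 1) :: l) =
      -coeff j (fibSeries ℤ (n - 1)) * (l.map fun i => -coeff i (fibSeries ℤ n)).prod := by
  have hneg : (l.map fun i => -coeff i (fibSeries ℤ n)) =
      (l.map fun i => ((n - i).choose i : ℤ)).map Neg.neg := by
    simp [fibSeries, Function.comp_def]
  rw [hneg, List.prod_map_neg, compWeight]
  simp [fibSeries, Nat.sub_sub, add_comm 1 j, pow_succ]
  ring

theorem sum_compWeight_succ (n m : ℕ) :
    ∑ c : Composition (m + 1), compWeight n c.blocks =
      -coeff m (fibSeries ℤ (n - 1) * compositionSeries fun i => -coeff i (fibSeries ℤ n)) := by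
  rw [Composition.sum_blocks_succ, coeff_mul, Nat.sum_antidiagonal_eq_sum_range_succ_mk,
    ← sum_neg_distrib]
  refine sum_congr rfl fun j _ => ?_
  simp [compWeight_cons, compositionSeries, mul_sum]

theorem sum_compWeight_eq_coeff_signedCatalanSeries {m n : ℕ} (hm : 1 ≤ m) (hmn : m ≤ n) :
    ∑ c : Composition m, compWeight n c.blocks = coeff m (signedCatalanSeries ℤ) := by
  obtain ⟨m, rfl⟩ : ∃ k, m = k + 1 := ⟨m - 1, by omega⟩
  obtain ⟨n, rfl⟩ : ∃ k, n = k + 1 := ⟨n - 1, by omega⟩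
  rw [sum_compWeight_succ, Nat.add_sub_cancel, ← map_neg, ← coeff_succ_X_mul]
  set d := signedCatalanSeries ℤ
  set T := compositionSeries fun i => -coeff i (fibSeries ℤ (n + 1))
  have hT : fibSeries ℤ (n + 1) * T = 1 :=
    mul_compositionSeries_neg_coeff (constantCoeff_fibSeries _)
  have hfib := mul_fibSeries_add_X_mul_fibSeries (signedCatalanSeries_sq (R := ℤ)) n
  have hdvd : X ^ (n + 2) ∣ d ^ (n + 2) * T :=
    (pow_dvd_pow_of_dvd X_dvd_signedCatalanSeries _).mul_right _
  have hsplit : X * -(fibSeries ℤ n * T) = d - d ^ (n + 2) * T := by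
    linear_combination d * hT - T * hfib
  rw [hsplit, map_sub, X_pow_dvd_iff.1 hdvd _ (by omega), sub_zero]

theorem weighted_compositions_independent_of_n :
    (∀ m n n' : ℕ, 1 ≤ m → m ≤ n → m ≤ n' →
      ∑ c : Composition m, compWeight n c.blocks =
        ∑ c : Composition m, compWeight n' c.blocks) ∧
    (∀ n : ℕ, 1 ≤ n →
      ∑ c : Composition n, compWeight n c.blocks = (-1) ^ n * catalan (n - 1)) := by
  refine ⟨fun m n n' hm hmn hmn' => ?_, fun n hn => ?_⟩
  · rw [sum_compWeight_eq_coeff_signedCatalanSeries hm hmn,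
      sum_compWeight_eq_coeff_signedCatalanSeries hm hmn']
  · obtain ⟨k, rfl⟩ : ∃ k, n = k + 1 := ⟨n - 1, by omega⟩
    rw [sum_compWeight_eq_coeff_signedCatalanSeries hn le_rfl, coeff_succ_signedCatalanSeries,
      Nat.add_sub_cancel]
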